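/- arXiv:1309.1976 — 3 statements merged into one kernel-verified Lean document; each statement's English description precedes it below -/
import Mathlib

section
/- Let T ≥ 2 be an integer and let R₁, …, R_T be real numbers satisfying 0 < R_min ≤ R_t ≤ R_max for all t. Then 1 + Σ_{t=1}^{T-1} (R_t − R_{t+1})/R_t = T − Σ_{t=1}^{T-1} R_{t+1}/R_t, and this quantity is at most T − (T−1)·(R_min/R_max)^{1/(T-1)}. -/
/-!
Since `(R_t - R_{t+1}) / R_t = 1 - R_{t+1} / R_t`, the loss factor is `T` minus the sum of the
`T - 1` consecutive ratios `R_{t+1} / R_t`. These ratios telescope to the product `R_T / R_1`,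
so by AM-GM their sum is at least `(T - 1) (R_T / R_1)^{1/(T-1)}`, and
`R_T / R_1 ≥ R_min / R_max`.
-/

open Finset Real

theorem card_mul_prod_rpow_inv_card_le_sum {ι : Type*} (s : Finset ι) (z : ι → ℝ)
    (hz : ∀ i ∈ s, 0 ≤ z i) :
    #s * (∏ i ∈ s, z i) ^ (#s : ℝ)⁻¹ ≤ ∑ i ∈ s, z i := by
  rcases s.eq_empty_or_nonempty with rfl | hs
  · simp
  have hcard : (0 : ℝ) < #s := by exact_mod_cast hs.card_pos
  have amgm := geom_mean_le_arith_mean s (fun _ => 1) z (fun _ _ => zero_le_one)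
    (by simpa using hcard) hz
  simp only [rpow_one, one_mul, sum_const, nsmul_eq_mul, mul_one] at amgm
  rwa [le_div_iff₀ hcard, mul_comm] at amgm

theorem prod_Ico_div_of_ne_zero {K : Type*} [CommGroupWithZero K] (f : ℕ → K) {m n : ℕ}
    (hmn : m ≤ n) (hf : ∀ i ∈ Icc m n, f i ≠ 0) :
    ∏ i ∈ Ico m n, f (i + 1) / f i = f n / f m := by
  induction n, hmn using Nat.le_induction with
  | base => simp [div_self (hf m (by simp))]
  | succ n hmn ih =>
    rw [prod_Ico_succ_top hmn, ih fun i hi => hf i (Icc_subset_Icc_right n.le_succ hi),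
      mul_comm, div_mul_div_cancel₀ (hf n (by simp [hmn]))]

theorem sub_mul_rpow_div_le_sum_Ico_div (x : ℕ → ℝ) {m n : ℕ} (hmn : m ≤ n)
    (hx : ∀ i ∈ Icc m n, 0 < x i) :
    ((n : ℝ) - m) * (x n / x m) ^ (1 / ((n : ℝ) - m)) ≤ ∑ i ∈ Ico m n, x (i + 1) / x i := by
  have hcard : (#(Ico m n) : ℝ) = n - m := by rw [Nat.card_Ico, Nat.cast_sub hmn]
  have amgm := card_mul_prod_rpow_inv_card_le_sum (Ico m n) (fun i => x (i + 1) / x i)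
    fun i hi => by
      simp only [mem_Ico] at hi
      exact (div_pos (hx (i + 1) (by simp; omega)) (hx i (by simp; omega))).le
  rwa [prod_Ico_div_of_ne_zero x hmn fun i hi => (hx i hi).ne', hcard, ← one_div] at amgm

/-- Numerical core of Theorem 2: the time-sharing separation loss factor
`1 + Σ_{t=1}^{T-1} (R_t − R_{t+1})/R_t` equals `T − Σ_{t=1}^{T-1} R_{t+1}/R_t`
and is at most `T − (T−1)·(R_min/R_max)^{1/(T-1)}`. -/
theorem stmt_0 (T : ℕ) (hT : 2 ≤ T) (R : ℕ → ℝ) (Rmin Rmax : ℝ)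
    (hRmin : 0 < Rmin)
    (hbound : ∀ t ∈ Finset.Icc 1 T, Rmin ≤ R t ∧ R t ≤ Rmax) :
    (1 + ∑ t ∈ Finset.Icc 1 (T - 1), (R t - R (t + 1)) / R t
      = (T : ℝ) - ∑ t ∈ Finset.Icc 1 (T - 1), R (t + 1) / R t) ∧
    (1 + ∑ t ∈ Finset.Icc 1 (T - 1), (R t - R (t + 1)) / R t
      ≤ (T : ℝ) - ((T : ℝ) - 1) * (Rmin / Rmax) ^ ((1 : ℝ) / ((T : ℝ) - 1))) := by
  have hR : ∀ t ∈ Icc 1 T, 0 < R t := fun t ht => hRmin.trans_le (hbound t ht).1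
  have hIcc : Icc 1 (T - 1) = Ico 1 T := by ext; simp; omega
  have hloss : 1 + ∑ t ∈ Icc 1 (T - 1), (R t - R (t + 1)) / R t
      = (T : ℝ) - ∑ t ∈ Icc 1 (T - 1), R (t + 1) / R t := by
    have hsplit : ∀ t ∈ Ico 1 T, (R t - R (t + 1)) / R t = 1 - R (t + 1) / R t := fun t ht => by
      rw [sub_div, div_self (hR t (Ico_subset_Icc_self ht)).ne']
    rw [hIcc, sum_congr rfl hsplit, sum_sub_distrib, sum_const, Nat.card_Ico, nsmul_one,
      Nat.cast_sub (by omega)]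
    ring
  refine ⟨hloss, hloss ▸ ?_⟩
  have hT1 : (0 : ℝ) ≤ T - 1 := by
    have : (2 : ℝ) ≤ T := by exact_mod_cast hT
    linarith
  have hR1 := hbound 1 (by simp; omega)
  have hRmax : 0 < Rmax := hRmin.trans_le (hR1.1.trans hR1.2)
  have hends : Rmin / Rmax ≤ R T / R 1 :=
    div_le_div₀ (hR T (by simp; omega)).le (hbound T (by simp; omega)).1 (hR 1 (by simp; omega))
      hR1.2
  have hamgm := sub_mul_rpow_div_le_sum_Ico_div R (by omega : 1 ≤ T) hR
  rw [Nat.cast_one] at hamgm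
  rw [hIcc]
  apply sub_le_sub_left
  calc ((T : ℝ) - 1) * (Rmin / Rmax) ^ (1 / ((T : ℝ) - 1))
      ≤ ((T : ℝ) - 1) * (R T / R 1) ^ (1 / ((T : ℝ) - 1)) := by gcongr
    _ ≤ _ := hamgm
end

section
/- Let T ≥ 2 be an integer, let R₁ ≥ R₂ ≥ … ≥ R_T > 0 and let C₁, …, C_T be strictly positive real numbers. Let M = max_{t=1,…,T} (R_t/C_t). Then R_T/C_T + Σ_{t=1}^{T-1} (R_t − R_{t+1})/C_t ≤ M·(T − Σ_{t=1}^{T-1} R_{t+1}/R_t). -/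
/-!
Each step of the separation scheme costs `(R t - R (t+1)) / C t = (R t / C t) * (1 - R (t+1) / R t)`,
at most `M` times the fraction `1 - R (t+1) / R t` of the rate that is dropped; the last receiver
costs `R T / C T ≤ M`. Summing the `T - 1` fractions and the final `1` gives the bound.
-/

open Finset

theorem sub_div_le_mul_one_sub_div {a b c M : ℝ} (ha : 0 < a) (hba : b ≤ a)
    (hM : a / c ≤ M) : (a - b) / c ≤ M * (1 - b / a) := by
  have hfrac : 0 ≤ 1 - b / a := sub_nonneg.mpr ((div_le_one ha).mpr hba)
  calc (a - b) / c = a / c * (1 - b / a) := by field_simp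
    _ ≤ M * (1 - b / a) := mul_le_mul_of_nonneg_right hM hfrac

theorem sum_sub_div_le_mul_sum_one_sub_div {ι : Type*} (s : Finset ι) {a b c : ι → ℝ} {M : ℝ}
    (ha : ∀ i ∈ s, 0 < a i) (hba : ∀ i ∈ s, b i ≤ a i) (hM : ∀ i ∈ s, a i / c i ≤ M) :
    ∑ i ∈ s, (a i - b i) / c i ≤ M * ∑ i ∈ s, (1 - b i / a i) := by
  rw [mul_sum]
  exact sum_le_sum fun i hi => sub_div_le_mul_one_sub_div (ha i hi) (hba i hi) (hM i hi)

theorem sum_Icc_one_sub (n : ℕ) (x : ℕ → ℝ) :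
    ∑ t ∈ Icc 1 n, (1 - x t) = n - ∑ t ∈ Icc 1 n, x t := by
  simp [sum_sub_distrib]

/-- Numerical form of Theorem 3 (channel-oriented bound): with `R` positive and
nonincreasing, `C` positive, and `M = max_t R_t/C_t`, the separation scheme's
channel-use count is at most `M·(T − Σ_{t=1}^{T-1} R_{t+1}/R_t)`. -/
theorem stmt_6 (T : ℕ) (hT : 2 ≤ T) (R C : ℕ → ℝ) (M : ℝ)
    (hRpos : ∀ t ∈ Finset.Icc 1 T, 0 < R t)
    (hRmono : ∀ t ∈ Finset.Icc 1 (T - 1), R (t + 1) ≤ R t)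
    (hM : M = (Finset.Icc 1 T).sup' (Finset.nonempty_Icc.mpr (by omega))
      (fun t => R t / C t)) :
    R T / C T + ∑ t ∈ Finset.Icc 1 (T - 1), (R t - R (t + 1)) / C t
      ≤ M * ((T : ℝ) - ∑ t ∈ Finset.Icc 1 (T - 1), R (t + 1) / R t) := by
  have hsub : Icc 1 (T - 1) ⊆ Icc 1 T := Icc_subset_Icc_right (Nat.sub_le T 1)
  have hle_M : ∀ t ∈ Icc 1 T, R t / C t ≤ M := fun t ht => hM ▸ le_sup' (fun t => R t / C t) ht
  have hlast : R T / C T ≤ M := hle_M T (mem_Icc.mpr ⟨by omega, le_rfl⟩)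
  have hsteps := sum_sub_div_le_mul_sum_one_sub_div (Icc 1 (T - 1))
    (fun t ht => hRpos t (hsub ht)) hRmono (fun t ht => hle_M t (hsub ht))
  have hT1 : ((T - 1 : ℕ) : ℝ) = T - 1 := by push_cast [Nat.cast_sub (by omega : 1 ≤ T)]; ring
  rw [sum_Icc_one_sub, hT1] at hsteps
  linarith
end

section
/- Let T ≥ 1 be an integer, let P > 0, and let 0 < N_min ≤ N₁ ≤ N₂ ≤ … ≤ N_T ≤ N_max be real numbers. Then log₂(1 + (P/(P + N_T))·Σ_{t=1}^{T-1} (1 − N_t/N_{t+1})) ≤ log₂(1 + ln(N_max/N_min)). -/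
/-!
Since `1 - a / b ≤ log b - log a` for `a, b > 0` (i.e. `1 - x⁻¹ ≤ log x`), the sum
`∑ (1 - N t / N (t + 1))` is dominated by the telescoping sum
`log N_T - log N_1 ≤ log (N_max / N_min)`.
It is nonnegative because the noise powers are nondecreasing, so the prefactor `P / (P + N_T) ≤ 1`
can only decrease it, and `log₂ (1 + ·)` is monotone.
-/

open Real Finset

lemma Real.one_sub_div_le_log_sub_log {a b : ℝ} (ha : 0 < a) (hb : 0 < b) :
    1 - a / b ≤ log b - log a := by
  have h := one_sub_inv_le_log_of_pos (div_pos hb ha)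
  rwa [inv_div, log_div hb.ne' ha.ne'] at h

lemma monotoneOn_Icc_of_le_succ {α : Type*} [Preorder α] {f : ℕ → α} {a n : ℕ}
    (hf : ∀ t ∈ Finset.Icc a n, f t ≤ f (t + 1)) : MonotoneOn f (Set.Icc a (n + 1)) :=
  monotoneOn_of_le_succ Set.ordConnected_Icc fun t _ ht hst ↦
    hf t (Finset.mem_Icc.mpr ⟨ht.1, by simpa using hst.2⟩)

section NoiseSum

variable {N : ℕ → ℝ} {n : ℕ}

lemma sum_Icc_one_sub_div_nonneg (hpos : ∀ t ∈ Set.Icc 1 (n + 1), 0 < N t)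
    (hmono : ∀ t ∈ Finset.Icc 1 n, N t ≤ N (t + 1)) :
    0 ≤ ∑ t ∈ Finset.Icc 1 n, (1 - N t / N (t + 1)) := by
  refine sum_nonneg fun t ht ↦ ?_
  have ht' := Finset.mem_Icc.mp ht
  have hle : N t / N (t + 1) ≤ 1 :=
    div_le_one_of_le₀ (hmono t ht) (hpos (t + 1) ⟨by omega, by omega⟩).le
  linarith

lemma sum_Icc_one_sub_div_le_log_sub_log (hpos : ∀ t ∈ Set.Icc 1 (n + 1), 0 < N t) :
    ∑ t ∈ Finset.Icc 1 n, (1 - N t / N (t + 1)) ≤ log (N (n + 1)) - log (N 1) := by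
  calc ∑ t ∈ Finset.Icc 1 n, (1 - N t / N (t + 1))
      ≤ ∑ t ∈ Finset.Ico 1 (n + 1), (log (N (t + 1)) - log (N t)) := by
        rw [Finset.Ico_add_one_right_eq_Icc]
        refine sum_le_sum fun t ht ↦ ?_
        have ht' := Finset.mem_Icc.mp ht
        exact one_sub_div_le_log_sub_log (hpos t ⟨ht'.1, by omega⟩)
          (hpos (t + 1) ⟨by omega, by omega⟩)
    _ = log (N (n + 1)) - log (N 1) := sum_Ico_sub (fun t ↦ log (N t)) (by omega)

end NoiseSum

/-- Numerical content of Corollary 2: with noise powers confined to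
`[N_min, N_max]`, the separation gap in bits is at most
`log₂(1 + ln(N_max/N_min))`. -/
theorem stmt_15 (T : ℕ) (hT : 1 ≤ T) (P : ℝ) (hP : 0 < P)
    (Nmin Nmax : ℝ) (N : ℕ → ℝ) (hNmin : 0 < Nmin)
    (hlb : Nmin ≤ N 1)
    (hmono : ∀ t ∈ Finset.Icc 1 (T - 1), N t ≤ N (t + 1))
    (hub : N T ≤ Nmax) :
    Real.logb 2 (1 + (P / (P + N T)) *
        ∑ t ∈ Finset.Icc 1 (T - 1), (1 - N t / N (t + 1)))
      ≤ Real.logb 2 (1 + Real.log (Nmax / Nmin)) := by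
  obtain ⟨n, rfl⟩ := Nat.exists_eq_add_of_le' hT
  rw [Nat.add_sub_cancel] at hmono ⊢
  have hpos : ∀ t ∈ Set.Icc 1 (n + 1), 0 < N t := fun t ht ↦
    hNmin.trans_le <| hlb.trans (monotoneOn_Icc_of_le_succ hmono ⟨le_rfl, by omega⟩ ht ht.1)
  have hNT := hpos (n + 1) ⟨by omega, le_rfl⟩
  set S := ∑ t ∈ Finset.Icc 1 n, (1 - N t / N (t + 1))
  have hS_nonneg : 0 ≤ S := sum_Icc_one_sub_div_nonneg hpos hmono
  have hS_le : S ≤ log (Nmax / Nmin) := by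
    calc S ≤ log (N (n + 1)) - log (N 1) := sum_Icc_one_sub_div_le_log_sub_log hpos
      _ ≤ log Nmax - log Nmin := by gcongr
      _ = log (Nmax / Nmin) := (log_div (hNT.trans_le hub).ne' hNmin.ne').symm
  have hcoef : P / (P + N (n + 1)) ≤ 1 := div_le_one_of_le₀ (by linarith) (by positivity)
  apply logb_le_logb_of_le one_lt_two (by positivity)
  calc 1 + P / (P + N (n + 1)) * S ≤ 1 + 1 * S := by gcongr
    _ ≤ 1 + log (Nmax / Nmin) := by linarith
end
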